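/- arXiv:2404.06868 — 3 statements merged into one kernel-verified Lean document; each statement's English description precedes it below -/
import Mathlib

section
/- Let α be a countable type. Then there exists a function Φ : α → ℝ such that the map from finite subsets of α to ℝ sending a finite set X to ∑_{x ∈ X} Φ(x) is injective; i.e., for all finite sets X, Y ⊆ α, if ∑_{x ∈ X} Φ(x) = ∑_{y ∈ Y} Φ(y) then X = Y. -/
open Finset Function

/-- Uniqueness of base-`b` expansions, transported along the injection `c`. -/
theorem Finset.sum_pow_comp_injective {α : Type*} {b : ℕ} (hb : 2 ≤ b) {c : α → ℕ}
    (hc : Injective c) : Injective fun X : Finset α => ∑ x ∈ X, b ^ c x := by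
  intro X Y h
  have hmap : X.map ⟨c, hc⟩ = Y.map ⟨c, hc⟩ :=
    geomSum_injective hb (by simpa only [sum_map, Embedding.coeFn_mk] using h)
  exact map_injective _ hmap

theorem exists_injective_sum_encoder (α : Type*) [Countable α] :
    ∃ Φ : α → ℝ, ∀ X Y : Finset α,
      ∑ x ∈ X, Φ x = ∑ y ∈ Y, Φ y → X = Y := by
  obtain ⟨c, hc⟩ := Countable.exists_injective_nat α
  refine ⟨fun x => (2 : ℝ) ^ c x, fun X Y h => sum_pow_comp_injective le_rfl hc ?_⟩
  beta_reduce at h ⊢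
  exact_mod_cast h
end

section
/- Let α be a countable type and let f be any function from finite subsets of α to ℝ. Then there exist functions Φ : α → ℝ and ρ : ℝ → ℝ such that for every finite set X ⊆ α, f(X) = ρ(∑_{x ∈ X} Φ(x)). -/
/-!
Enumerate `α` injectively by `e : α → ℕ` and encode `x` as `Φ x = 2 ^ e x`. By uniqueness of binary
expansions, the sum of the codes determines the finite set, so `X ↦ ∑ x ∈ X, Φ x` is injective
and any `f` factors through it.
-/

open Function

theorem Finset.sum_two_pow_injective {α : Type*} {e : α → ℕ} (he : Injective e) :
    Injective fun X : Finset α => ∑ x ∈ X, 2 ^ e x := by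
  intro X Y hXY
  have h_image : ∑ i ∈ X.image e, 2 ^ i = ∑ i ∈ Y.image e, 2 ^ i := by
    rwa [Finset.sum_image he.injOn, Finset.sum_image he.injOn]
  exact Finset.image_injective he (Finset.geomSum_injective le_rfl h_image)

theorem exists_injective_finset_sum (α : Type*) [Countable α] :
    ∃ Φ : α → ℝ, Injective fun X : Finset α => ∑ x ∈ X, Φ x := by
  obtain ⟨e, he⟩ := Countable.exists_injective_nat α
  refine ⟨fun x => (2 : ℝ) ^ e x, fun X Y hXY => Finset.sum_two_pow_injective he ?_⟩
  dsimp only at hXY ⊢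
  exact_mod_cast hXY

theorem deep_sets_decomposition (α : Type*) [Countable α] (f : Finset α → ℝ) :
    ∃ (Φ : α → ℝ) (ρ : ℝ → ℝ), ∀ X : Finset α,
      f X = ρ (∑ x ∈ X, Φ x) := by
  obtain ⟨Φ, hΦ⟩ := exists_injective_finset_sum α
  exact ⟨Φ, extend (fun X : Finset α => ∑ x ∈ X, Φ x) f 0, fun X => (hΦ.extend_apply f 0 X).symm⟩
end

section
/- Let α be a countable type and let f be a function from lists over α to ℝ. Assume we only evaluate f on duplicate-free lists (lists representing sets). Then the following are equivalent: (1) f is permutation-invariant on duplicate-free lists, i.e., for all duplicate-free lists l₁, l₂ over α with l₁ a permutation of l₂ one has f(l₁) = f(l₂); (2) there exist functions Φ : α → ℝ and ρ : ℝ → ℝ such that for every duplicate-free list l over α, f(l) = ρ(∑ of the list l.map Φ). -/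
theorem deep_sets_theorem (α : Type*) [Countable α] (f : List α → ℝ) :
    (∀ l₁ l₂ : List α, l₁.Nodup → l₂.Nodup → l₁.Perm l₂ → f l₁ = f l₂) ↔
    (∃ (Φ : α → ℝ) (ρ : ℝ → ℝ), ∀ l : List α, l.Nodup →
      f l = ρ (l.map Φ).sum) := by
  constructor
  · intro hf
    obtain ⟨e, he⟩ := Countable.exists_injective_nat α
    set Φ : α → ℝ := fun x => (2 : ℝ) ^ (e x) with hΦ
    -- the Φ-sum of a nodup list is the cast of a natural number determined by its element set
    have hsum : ∀ l : List α, l.Nodup →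
        (l.map Φ).sum = ((∑ i ∈ (l.map e).toFinset, 2 ^ i : ℕ) : ℝ) := by
      intro l hl
      have hnd : (l.map e).Nodup := hl.map he
      have h1 : l.map Φ = (l.map e).map (fun i => (2 : ℝ) ^ i) := by
        simp [Φ, Function.comp]
      rw [h1, ← List.sum_toFinset _ hnd]
      push_cast
      rfl
    -- key: equal Φ-sums for nodup lists give permutations
    have key : ∀ l₁ l₂ : List α, l₁.Nodup → l₂.Nodup →
        (l₁.map Φ).sum = (l₂.map Φ).sum → l₁.Perm l₂ := by
      intro l₁ l₂ h₁ h₂ hsums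
      rw [hsum l₁ h₁, hsum l₂ h₂, Nat.cast_inj] at hsums
      have hfin := Finset.geomSum_injective (n := 2) le_rfl hsums
      rw [List.perm_ext_iff_of_nodup h₁ h₂]
      intro a
      constructor
      · intro ha
        have : e a ∈ (l₂.map e).toFinset := by
          rw [← hfin]; simp only [List.mem_toFinset, List.mem_map]
          exact ⟨a, ha, rfl⟩
        simp only [List.mem_toFinset, List.mem_map] at this
        obtain ⟨b, hb, hba⟩ := this
        rwa [← he hba]
      · intro ha
        have : e a ∈ (l₁.map e).toFinset := by
          rw [hfin]; simp only [List.mem_toFinset, List.mem_map]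
          exact ⟨a, ha, rfl⟩
        simp only [List.mem_toFinset, List.mem_map] at this
        obtain ⟨b, hb, hba⟩ := this
        rwa [← he hba]
    classical
    refine ⟨Φ, fun r => if h : ∃ l : List α, l.Nodup ∧ (l.map Φ).sum = r
      then f h.choose else 0, fun l hl => ?_⟩
    have hex : ∃ l' : List α, l'.Nodup ∧ (l'.map Φ).sum = (l.map Φ).sum := ⟨l, hl, rfl⟩
    show f l = if h : ∃ l' : List α, l'.Nodup ∧ (l'.map Φ).sum = (l.map Φ).sum
      then f h.choose else 0
    rw [dif_pos hex]
    obtain ⟨hnd, hsum'⟩ := hex.choose_spec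
    exact hf l hex.choose hl hnd (key l hex.choose hl hnd hsum'.symm)
  · rintro ⟨Φ, ρ, h⟩ l₁ l₂ h₁ h₂ hperm
    rw [h l₁ h₁, h l₂ h₂, (hperm.map Φ).sum_eq]
end
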